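/- arXiv:2010.14056 — 2 statements merged into one kernel-verified Lean document; each statement's English description precedes it below -/
import Mathlib

section
/- Let f₀ be a probability density on ℝ and let f_j for j ≥ 0 be defined iteratively by f_0 = f₀ and f_{j+1} = f₀ − (φ_σ * f_j − f_j). Then for every j ≥ 0, f_j = Σ_{i=0}^{j} (−1)^i · C(j+1, i+1) · φ_σ^{(i)} * f₀, where φ_σ^{(i)} * f₀ denotes the i-fold convolution of φ_σ with f₀ (with the convention that the 0-fold convolution is f₀ itself). -/
open MeasureTheory Real Set

/-- Gaussian density with mean 0 and standard deviation σ. -/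
noncomputable def gauss (σ t : ℝ) : ℝ :=
  (Real.sqrt (2 * Real.pi) * σ)⁻¹ * Real.exp (-(t ^ 2) / (2 * σ ^ 2))

/-- Convolution of the Gaussian kernel `gauss σ` with a function `g`. -/
noncomputable def gconv (σ : ℝ) (g : ℝ → ℝ) : ℝ → ℝ :=
  fun y => ∫ t, gauss σ (y - t) * g t

/-!
Convolution with `gauss σ` is linear on integrable functions, and it preserves integrability, so
if `f j = Σᵢ cⱼᵢ Gᵢ` with `Gᵢ = (gconv σ)^[i] f₀`, then `gconv σ (f j) = Σᵢ cⱼᵢ Gᵢ₊₁`. The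
recursion then becomes an identity between coefficient sequences, which is Pascal's rule
`C(j+1, i+1) + C(j+1, i+2) = C(j+2, i+2)`.
-/

open Finset

theorem sum_range_neg_one_pow_mul_choose_succ_smul {R M : Type*} [CommRing R] [AddCommGroup M]
    [Module R M] (G : ℕ → M) (j : ℕ) :
    ∑ i ∈ range (j + 1 + 1), ((-1 : R) ^ i * ((j + 1 + 1).choose (i + 1) : R)) • G i =
      G 0 - (∑ i ∈ range (j + 1), ((-1 : R) ^ i * ((j + 1).choose (i + 1) : R)) • G (i + 1) -
        ∑ i ∈ range (j + 1), ((-1 : R) ^ i * ((j + 1).choose (i + 1) : R)) • G i) := by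
  have hextend : ∑ i ∈ range (j + 1), ((-1 : R) ^ i * ((j + 1).choose (i + 1) : R)) • G i =
      ∑ i ∈ range (j + 1 + 1), ((-1 : R) ^ i * ((j + 1).choose (i + 1) : R)) • G i := by
    rw [sum_range_succ _ (j + 1), Nat.choose_succ_self]
    simp
  have hpascal : ∀ i, ((-1 : R) ^ (i + 1) * ((j + 1 + 1).choose (i + 1 + 1) : R)) =
      -((-1 : R) ^ i * ((j + 1).choose (i + 1) : R)) +
        (-1 : R) ^ (i + 1) * ((j + 1).choose (i + 1 + 1) : R) := by
    intro i
    rw [Nat.choose_succ_succ (j + 1) (i + 1)]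
    push_cast
    ring
  rw [hextend, sum_range_succ' _ (j + 1), sum_range_succ' _ (j + 1)]
  simp only [hpascal, add_smul, neg_smul, sum_add_distrib, sum_neg_distrib]
  simp only [pow_zero, one_mul, zero_add, Nat.choose_one_right]
  push_cast
  module

theorem continuous_gauss (σ : ℝ) : Continuous (gauss σ) := by
  unfold gauss
  fun_prop

theorem abs_gauss_le_abs_gauss_zero (σ t : ℝ) : |gauss σ t| ≤ |gauss σ 0| := by
  have hexp : exp (-(t ^ 2) / (2 * σ ^ 2)) ≤ 1 :=
    exp_le_one_iff.mpr (div_nonpos_of_nonpos_of_nonneg (by nlinarith) (by positivity))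
  simp only [gauss, abs_mul, abs_exp, ne_eq, OfNat.ofNat_ne_zero, not_false_eq_true, zero_pow,
    neg_zero, zero_div, exp_zero, mul_one]
  exact mul_le_of_le_one_right (abs_nonneg _) hexp

theorem integrable_gauss {σ : ℝ} (hσ : σ ≠ 0) : Integrable (gauss σ) := by
  refine ((integrable_exp_neg_mul_sq (b := (2 * σ ^ 2)⁻¹) (by positivity)).const_mul
    (√(2 * π) * σ)⁻¹).congr ?_
  refine Filter.Eventually.of_forall fun t => ?_
  simp only [gauss]
  ring_nf

theorem gconv_eq_convolution (σ : ℝ) (g : ℝ → ℝ) :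
    gconv σ g = convolution (gauss σ) g (ContinuousLinearMap.mul ℝ ℝ) volume := by
  funext y
  rw [gconv, convolution_def, ← integral_sub_left_eq_self _ volume y]
  simp

theorem integrable_gconv {σ : ℝ} (hσ : σ ≠ 0) {g : ℝ → ℝ} (hg : Integrable g) :
    Integrable (gconv σ g) := by
  rw [gconv_eq_convolution]
  exact (integrable_gauss hσ).integrable_convolution _ hg

theorem integrable_iterate_gconv {σ : ℝ} (hσ : σ ≠ 0) {g : ℝ → ℝ} (hg : Integrable g) (i : ℕ) :
    Integrable ((gconv σ)^[i] g) := by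
  induction i with
  | zero => exact hg
  | succ i ih => simpa only [Function.iterate_succ_apply'] using integrable_gconv hσ ih

theorem integrable_gauss_sub_mul {σ : ℝ} {g : ℝ → ℝ} (hg : Integrable g) (y : ℝ) :
    Integrable (fun t => gauss σ (y - t) * g t) :=
  hg.bdd_mul ((continuous_gauss σ).comp (continuous_sub_left y)).aestronglyMeasurable
    (Filter.Eventually.of_forall fun t => abs_gauss_le_abs_gauss_zero σ (y - t))

theorem gconv_sum_smul {σ : ℝ} {ι : Type*} (s : Finset ι) (c : ι → ℝ) {g : ι → ℝ → ℝ}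
    (hg : ∀ i ∈ s, Integrable (g i)) :
    gconv σ (∑ i ∈ s, c i • g i) = ∑ i ∈ s, c i • gconv σ (g i) := by
  funext y
  simp only [gconv, Finset.sum_apply, Pi.smul_apply, smul_eq_mul, mul_sum]
  rw [integral_finsetSum _ fun i hi => integrable_gauss_sub_mul ((hg i hi).const_mul (c i)) y]
  refine sum_congr rfl fun i _ => ?_
  rw [← integral_const_mul]
  congr 1
  funext t
  ring

theorem stmt_5_general (σ : ℝ) (hσ : 0 < σ) (f₀ : ℝ → ℝ)
    (hint : Integrable f₀)
    (f : ℕ → ℝ → ℝ) (h0 : f 0 = f₀)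
    (hrec : ∀ j, f (j + 1) = f₀ - (gconv σ (f j) - f j)) :
    ∀ j, f j = ∑ i ∈ Finset.range (j + 1),
      ((-1 : ℝ) ^ i * ((j + 1).choose (i + 1) : ℝ)) • ((gconv σ)^[i] f₀) := by
  intro j
  induction j with
  | zero => simp [h0]
  | succ j ih =>
    rw [hrec, ih, gconv_sum_smul _ _ fun i _ => integrable_iterate_gconv hσ.ne' hint i,
      sum_range_neg_one_pow_mul_choose_succ_smul]
    simp only [Function.iterate_succ_apply', Function.iterate_zero_apply]

/-- closed form of the Kruijer–Rousseau–van der Vaart iterates: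
`f_j = Σ_{i=0}^{j} (−1)^i C(j+1, i+1) φ_σ^{(i)} * f₀`. -/
theorem stmt_5 (σ : ℝ) (hσ : 0 < σ) (f₀ : ℝ → ℝ) (hf₀ : ∀ t, 0 ≤ f₀ t)
    (hint : Integrable f₀) (hdens : ∫ t, f₀ t = 1)
    (f : ℕ → ℝ → ℝ) (h0 : f 0 = f₀)
    (hrec : ∀ j, f (j + 1) = f₀ - (gconv σ (f j) - f j)) :
    ∀ j, f j = ∑ i ∈ Finset.range (j + 1),
      ((-1 : ℝ) ^ i * ((j + 1).choose (i + 1) : ℝ)) • ((gconv σ)^[i] f₀) :=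
  stmt_5_general σ hσ f₀ hint f h0 hrec
end

section
/- For a, b ∈ ℝ and σ > 0, the L₁ distance between shifted Gaussian densities satisfies ∫_ℝ |φ_σ(y − a) − φ_σ(y − b)| dy ≤ √(2/π) · |a − b| / σ. -/
/-!
Writing `f (y - a) - f (y - b) = ∫_a^b f' (y - t) dt` and integrating over `y` with Tonelli,
the translation invariance of Lebesgue measure bounds the `L¹` distance between two translates
of a differentiable function by `|a - b| * ‖f'‖₁`. For the Gaussian, `φ_σ'` has a single sign on each
half-line, so `‖φ_σ'‖₁ = 2 φ_σ(0) = √(2/π) / σ`.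
-/

open MeasureTheory Real Set

open Filter
open scoped Interval Topology

section Translation

variable {f f' : ℝ → ℝ}

theorem enorm_sub_comp_sub_le_lintegral (hf : ∀ x, HasDerivAt f (f' x) x)
    (hf' : Integrable f') (y a b : ℝ) :
    ‖f (y - a) - f (y - b)‖ₑ ≤ ∫⁻ t in Ι a b, ‖f' (y - t)‖ₑ := by
  have hftc : ∫ t in a..b, f' (y - t) = f (y - a) - f (y - b) := by
    rw [intervalIntegral.integral_comp_sub_left,
      intervalIntegral.integral_eq_sub_of_hasDerivAt (fun x _ => hf x) hf'.intervalIntegrable]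
  rw [← hftc, ← enorm_norm, intervalIntegral.norm_integral_eq_norm_integral_uIoc, enorm_norm]
  exact enorm_integral_le_lintegral_enorm _

theorem lintegral_enorm_sub_comp_sub_le (hf : ∀ x, HasDerivAt f (f' x) x)
    (hf' : Integrable f') (a b : ℝ) :
    ∫⁻ y, ‖f (y - a) - f (y - b)‖ₑ ≤ ENNReal.ofReal |b - a| * ∫⁻ x, ‖f' x‖ₑ := by
  have hmeas : Measurable f' := by
    rw [show f' = deriv f from funext fun x => (hf x).deriv.symm]
    exact measurable_deriv f
  calc ∫⁻ y, ‖f (y - a) - f (y - b)‖ₑ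
      ≤ ∫⁻ y, ∫⁻ t in Ι a b, ‖f' (y - t)‖ₑ :=
        lintegral_mono fun y => enorm_sub_comp_sub_le_lintegral hf hf' y a b
    _ = ∫⁻ t in Ι a b, ∫⁻ y, ‖f' (y - t)‖ₑ :=
        lintegral_lintegral_swap (hmeas.comp (measurable_fst.sub measurable_snd)).enorm.aemeasurable
    _ = ∫⁻ t in Ι a b, ∫⁻ x, ‖f' x‖ₑ := by
        simp only [lintegral_sub_right_eq_self fun x => ‖f' x‖ₑ]
    _ = ENNReal.ofReal |b - a| * ∫⁻ x, ‖f' x‖ₑ := by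
        rw [setLIntegral_const, Real.volume_uIoc, mul_comm]

theorem integral_abs_sub_comp_sub_le (hf : ∀ x, HasDerivAt f (f' x) x)
    (hf' : Integrable f') (a b : ℝ) :
    ∫ y, |f (y - a) - f (y - b)| ≤ |a - b| * ∫ x, |f' x| := by
  have hbound : ∫⁻ y, ‖f (y - a) - f (y - b)‖ₑ ≤ ENNReal.ofReal (|a - b| * ∫ x, |f' x|) := by
    rw [ENNReal.ofReal_mul (abs_nonneg _), abs_sub_comm]
    simp only [← Real.norm_eq_abs, ofReal_integral_norm_eq_lintegral_enorm hf']
    exact lintegral_enorm_sub_comp_sub_le hf hf' a b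
  calc ∫ y, |f (y - a) - f (y - b)|
      ≤ (∫⁻ y, ‖f (y - a) - f (y - b)‖ₑ).toReal := by
        simpa only [Real.norm_eq_abs, abs_abs, ← Real.enorm_eq_ofReal_abs] using
          (le_abs_self _).trans (norm_integral_le_lintegral_norm fun y => |f (y - a) - f (y - b)|)
    _ ≤ |a - b| * ∫ x, |f' x| :=
        ENNReal.toReal_le_of_le_ofReal (by positivity) hbound

end Translation

theorem hasDerivAt_gauss (σ t : ℝ) : HasDerivAt (gauss σ) (-(t / σ ^ 2) * gauss σ t) t := by
  have h := (((hasDerivAt_pow 2 t).neg.div_const (2 * σ ^ 2)).exp).const_mul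
    (Real.sqrt (2 * Real.pi) * σ)⁻¹
  refine h.congr_deriv ?_
  simp only [gauss, Pi.neg_apply]
  ring

theorem gauss_nonneg {σ : ℝ} (hσ : 0 ≤ σ) (t : ℝ) : 0 ≤ gauss σ t := by
  unfold gauss
  positivity

theorem gauss_abs (σ t : ℝ) : gauss σ |t| = gauss σ t := by
  rw [gauss, gauss, sq_abs]

theorem two_mul_gauss_zero (σ : ℝ) : 2 * gauss σ 0 = Real.sqrt (2 / Real.pi) / σ := by
  have hsqrt : Real.sqrt (2 / Real.pi) * Real.sqrt (2 * Real.pi) = 2 := by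
    rw [← Real.sqrt_mul (by positivity),
      show 2 / π * (2 * π) = 2 ^ 2 by field_simp, Real.sqrt_sq zero_le_two]
  conv_lhs => rw [← hsqrt]
  rw [gauss, sq, zero_mul, neg_zero, zero_div, exp_zero, mul_one]
  field_simp

theorem tendsto_gauss_atTop {σ : ℝ} (hσ : σ ≠ 0) :
    Tendsto (gauss σ) atTop (𝓝 0) := by
  have h : Tendsto (fun t : ℝ => -(t ^ 2) / (2 * σ ^ 2)) atTop atBot :=
    (tendsto_neg_atTop_atBot.comp (tendsto_pow_atTop two_ne_zero)).atBot_div_const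
      (by positivity)
  have hlim := (tendsto_exp_atBot.comp h).const_mul (Real.sqrt (2 * Real.pi) * σ)⁻¹
  rw [mul_zero] at hlim
  exact hlim

theorem integrable_deriv_gauss {σ : ℝ} (hσ : σ ≠ 0) :
    Integrable fun t => -(t / σ ^ 2) * gauss σ t := by
  have h := (integrable_mul_exp_neg_mul_sq (b := (2 * σ ^ 2)⁻¹) (by positivity)).const_mul
    (-(σ ^ 2)⁻¹ * (Real.sqrt (2 * Real.pi) * σ)⁻¹)
  refine h.congr (Eventually.of_forall fun t => ?_)
  simp only [gauss]
  ring_nf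

theorem integral_abs_deriv_gauss {σ : ℝ} (hσ : 0 < σ) :
    ∫ t, |-(t / σ ^ 2) * gauss σ t| = Real.sqrt (2 / Real.pi) / σ := by
  have hfold : ∀ t, |-(t / σ ^ 2) * gauss σ t| = |t| / σ ^ 2 * gauss σ |t| := fun t => by
    rw [gauss_abs, abs_mul, abs_neg, abs_div, abs_of_nonneg (gauss_nonneg hσ.le t),
      abs_of_nonneg (sq_nonneg σ)]
  have hIoi : ∫ t in Ioi 0, t / σ ^ 2 * gauss σ t = gauss σ 0 := by
    have hderiv : ∀ t ∈ Ici (0 : ℝ), HasDerivAt (-gauss σ) (t / σ ^ 2 * gauss σ t) t :=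
      fun t _ => by simpa using (hasDerivAt_gauss σ t).neg
    have hint : IntegrableOn (fun t => t / σ ^ 2 * gauss σ t) (Ioi 0) := by
      simpa using (integrable_deriv_gauss hσ.ne').neg.integrableOn
    have hlim := (tendsto_gauss_atTop hσ.ne').neg
    rw [neg_zero] at hlim
    simpa using integral_Ioi_of_hasDerivAt_of_tendsto' hderiv hint hlim
  simp only [hfold]
  rw [integral_comp_abs (f := fun t => t / σ ^ 2 * gauss σ t), hIoi, two_mul_gauss_zero]

/-- L₁ distance between two shifted Gaussian densities. -/
theorem stmt_9 (a b σ : ℝ) (hσ : 0 < σ) :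
    ∫ y, |gauss σ (y - a) - gauss σ (y - b)|
      ≤ Real.sqrt (2 / Real.pi) * |a - b| / σ := by
  calc ∫ y, |gauss σ (y - a) - gauss σ (y - b)|
      ≤ |a - b| * ∫ t, |-(t / σ ^ 2) * gauss σ t| :=
        integral_abs_sub_comp_sub_le (hasDerivAt_gauss σ) (integrable_deriv_gauss hσ.ne') a b
    _ = Real.sqrt (2 / Real.pi) * |a - b| / σ := by
        rw [integral_abs_deriv_gauss hσ]
        ring
end
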